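/- arXiv:hep-th/0001081 — 5 statements merged into one kernel-verified Lean document; each statement's English description precedes it below -/
import Mathlib

section
/- Suppose r : ι → ι → ℝ is skew and satisfies the classical Yang–Baxter equation for the Lie algebra structure constants C. Then F : ι → ι → ι → ℝ defined by F a b k = Σ_l (r a l * C l k b − r b l * C l k a) gives structure constants of a Lie algebra on the dual space: F a b k = −(F b a k) for all a, b, k, and Σ_k (F a b k * F k c d + F b c k * F k a d + F c a k * F k b d) = 0 for all a, b, c, d. -/
open Finset

private def jfD {ι : Type*} (C : ι → ι → ι → ℝ) (r : ι → ι → ℝ)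
    (a b c d k l m : ι) : ℝ :=
  (r a l * C l k b - r b l * C l k a) * (r k m * C m d c - r c m * C m d k)
  + (r b l * C l k c - r c l * C l k b) * (r k m * C m d a - r a m * C m d k)
  + (r c l * C l k a - r a l * C l k c) * (r k m * C m d b - r b m * C m d k)

private def z1fD {ι : Type*} (C : ι → ι → ι → ℝ) (r : ι → ι → ℝ)
    (a b c d k l m : ι) : ℝ :=
  (r b l * r m k * C l k a + r m l * r a k * C l k b + r a l * r b k * C l k m) * C m d c
  + (r c l * r m k * C l k b + r m l * r b k * C l k c + r b l * r c k * C l k m) * C m d a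
  + (r a l * r m k * C l k c + r m l * r c k * C l k a + r c l * r a k * C l k m) * C m d b

private def z2fD {ι : Type*} (C : ι → ι → ι → ℝ) (r : ι → ι → ℝ)
    (a b c d k l m : ι) : ℝ :=
  -(r a l * r b m) * (C m d k * C k l c + C d l k * C k m c + C l m k * C k d c)
  - (r b l * r c m) * (C m d k * C k l a + C d l k * C k m a + C l m k * C k d a)
  + (r a l * r c m) * (C m d k * C k l b + C d l k * C k m b + C l m k * C k d b)

private def GD {ι : Type*} (C : ι → ι → ι → ℝ) (r : ι → ι → ℝ)
    (a b c d k l m : ι) : ℝ :=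
  jfD C r a b c d k l m - z1fD C r a b c d k l m - z2fD C r a b c d k l m

private theorem key_pointwise {ι : Type*} (C : ι → ι → ι → ℝ) (r : ι → ι → ℝ)
    (hC_anti : ∀ i j k, C i j k = -(C j i k)) (hr_skew : ∀ i j, r i j = -(r j i))
    (a b c d k l m : ι) :
    GD C r a b c d k l m + GD C r a b c d k m l + GD C r a b c d l k m
      + GD C r a b c d l m k + GD C r a b c d m k l + GD C r a b c d m l k = 0 := by
  simp only [GD, jfD, z1fD, z2fD]
  linear_combination ((1)*(C m d c)*(r a l)*(r k m) + (-1)*(C m d k)*(r a l)*(r c m) + (-1)*(C m d a)*(r c l)*(r k m) + (1)*(C m d k)*(r a m)*(r c l) + (-1)*(C m d c)*(r a k)*(r m l) + (-1)*(C m d a)*(r c l)*(r m k) + (-1)*(C m d l)*(r a k)*(r c m) + (-1)*(C d m l)*(r a m)*(r c k)) * (hC_anti k l b) + ((-1)*(C m d c)*(r b l)*(r k m) + (1)*(C m d k)*(r b l)*(r c m) + (1)*(C m d b)*(r c l)*(r k m) + (-1)*(C m d k)*(r b m)*(r c l) + (-1)*(C m d c)*(r b l)*(r m k) + (-1)*(C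 m d b)*(r c k)*(r m l) + (1)*(C m d l)*(r b k)*(r c m) + (1)*(C d m l)*(r b m)*(r c k)) * (hC_anti k l a) + ((1)*(C m d a)*(r b l)*(r k m) + (-1)*(C m d k)*(r a m)*(r b l) + (-1)*(C m d b)*(r a l)*(r k m) + (1)*(C m d k)*(r a l)*(r b m) + (-1)*(C m d a)*(r b k)*(r m l) + (-1)*(C m d b)*(r a l)*(r m k) + (1)*(C m d l)*(r a k)*(r b m) + (1)*(C d m l)*(r a m)*(r b k)) * (hC_anti k l c) + ((-1)*(C m d b)*(r a k)*(r c l) + (-1)*(C m d b)*(r a l)*(r c k)) * (hC_anti k l m) + ((-1)*(C l m k)*(r a l)*(r c m) + (-1)*(C m l k)*(r a m)*(r c l) + (1)*(C m l a)*(r c m)*(r l k) + (-1)*(C m l c)*(r a m)*(r l k) + (-1)*(C m l c)*(r a m)*(r k l) + (-1)*(C m l a)*(r c l)*(r k m) + (-1)*(C m l k)*(r a l)*(r c m) + (1)*(C l m a)*(r c l)*(r m k) + (-1)*(C l m c)*(r a l)*(r m k) + (-1)*(C l m c)*(r a l)*(r k m) + (-1)*(C l m a)*(r c m)*(r k l)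 + (-1)*(C l m k)*(r a m)*(r c l)) * (hC_anti d k b) + ((1)*(C m k b)*(r a m)*(r k l) + (-1)*(C m k a)*(r b m)*(r k l) + (-1)*(C m k a)*(r b m)*(r l k) + (-1)*(C m k b)*(r a k)*(r l m) + (1)*(C k m b)*(r a k)*(r m l) + (-1)*(C k m a)*(r b k)*(r m l) + (-1)*(C k m a)*(r b k)*(r l m) + (-1)*(C k m b)*(r a m)*(r l k)) * (hC_anti d l c) + ((-1)*(C m k b)*(r a m)*(r c l) + (1)*(C m k a)*(r b m)*(r c l) + (-1)*(C m k c)*(r a l)*(r b m) + (1)*(C m k b)*(r a l)*(r c m) + (-1)*(C m k a)*(r b l)*(r c m) + (1)*(C m k c)*(r a m)*(r b l) + (1)*(C k m c)*(r a m)*(r b l) + (1)*(C k m a)*(r b m)*(r c l) + (-1)*(C k m b)*(r a m)*(r c l)) * (hC_anti d l k) + ((1)*(C m k c)*(r b m)*(r k l) + (-1)*(C m k b)*(r c m)*(r k l) + (-1)*(C m k b)*(r c m)*(r l k) + (-1)*(C m k c)*(r b k)*(r l m) + (1)*(C k m c)*(r b k)*(r m l) + (-1)*(C k m b)*(r c k)*(r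 m l) + (-1)*(C k m b)*(r c k)*(r l m) + (-1)*(C k m c)*(r b m)*(r l k)) * (hC_anti d l a) + ((1)*(C m k a)*(r c m)*(r k l) + (-1)*(C m k c)*(r a m)*(r k l) + (-1)*(C m k c)*(r a m)*(r l k) + (-1)*(C m k a)*(r c k)*(r l m) + (-1)*(C m k l)*(r a k)*(r c m) + (-1)*(C k m l)*(r a k)*(r c m) + (-1)*(C m k l)*(r a m)*(r c k) + (1)*(C k m a)*(r c k)*(r m l) + (-1)*(C k m c)*(r a k)*(r m l) + (-1)*(C k m c)*(r a k)*(r l m) + (-1)*(C k m a)*(r c m)*(r l k) + (-1)*(C k m l)*(r a m)*(r c k)) * (hC_anti d l b) + ((1)*(C k l b)*(r a k)*(r l m) + (-1)*(C k l a)*(r b k)*(r l m) + (-1)*(C k l a)*(r b k)*(r m l) + (-1)*(C k l b)*(r a l)*(r m k) + (-1)*(C k l b)*(r a l)*(r k m) + (1)*(C k l a)*(r b l)*(r k m) + (1)*(C k l a)*(r b l)*(r m k) + (1)*(C k l b)*(r a k)*(r m l)) * (hC_anti d m c) + ((-1)*(C k l c)*(r a m)*(r b k) + (1)*(C k l b)*(r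 a m)*(r c k) + (-1)*(C k l a)*(r b m)*(r c k)) * (hC_anti d m l) + ((1)*(C k l c)*(r b k)*(r l m) + (-1)*(C k l b)*(r c k)*(r l m) + (-1)*(C k l b)*(r c k)*(r m l) + (-1)*(C k l c)*(r b l)*(r m k) + (-1)*(C k l c)*(r b l)*(r k m) + (1)*(C k l b)*(r c l)*(r k m) + (1)*(C k l b)*(r c l)*(r m k) + (1)*(C k l c)*(r b k)*(r m l)) * (hC_anti d m a) + ((1)*(C k l a)*(r c k)*(r l m) + (-1)*(C k l c)*(r a k)*(r l m) + (-1)*(C k l c)*(r a k)*(r m l) + (-1)*(C k l a)*(r c l)*(r m k) + (-1)*(C k l a)*(r c l)*(r k m) + (1)*(C k l c)*(r a l)*(r k m) + (1)*(C k l c)*(r a l)*(r m k) + (1)*(C k l a)*(r c k)*(r m l)) * (hC_anti d m b) + ((1)*(C m l b)*(r a m)*(r l k) + (-1)*(C m l a)*(r b m)*(r l k) + (-1)*(C m l a)*(r b m)*(r k l) + (-1)*(C m l b)*(r a l)*(r k m) + (1)*(C l m b)*(r a l)*(r m k) + (-1)*(C l m a)*(r b l)*(r m k) + (-1)*(C l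 m a)*(r b l)*(r k m) + (-1)*(C l m b)*(r a m)*(r k l)) * (hC_anti d k c) + ((-1)*(C m l b)*(r a m)*(r c k) + (1)*(C m l a)*(r b m)*(r c k) + (-1)*(C m l c)*(r a k)*(r b m) + (1)*(C m l b)*(r a k)*(r c m) + (-1)*(C m l a)*(r b k)*(r c m) + (1)*(C m l c)*(r a m)*(r b k) + (1)*(C l m c)*(r a m)*(r b k) + (1)*(C l m a)*(r b m)*(r c k) + (-1)*(C l m b)*(r a m)*(r c k)) * (hC_anti d k l) + ((1)*(C m l c)*(r b m)*(r l k) + (-1)*(C m l b)*(r c m)*(r l k) + (-1)*(C m l b)*(r c m)*(r k l) + (-1)*(C m l c)*(r b l)*(r k m) + (1)*(C l m c)*(r b l)*(r m k) + (-1)*(C l m b)*(r c l)*(r m k) + (-1)*(C l m b)*(r c l)*(r k m) + (-1)*(C l m c)*(r b m)*(r k l)) * (hC_anti d k a) + ((-1)*(C k m b)*(r a k)*(r c l) + (1)*(C k m a)*(r b k)*(r c l) + (-1)*(C k m c)*(r a l)*(r b k) + (1)*(C k m b)*(r a l)*(r c k) + (-1)*(C k m a)*(r b l)*(r c k) + (1)*(C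 k m c)*(r a k)*(r b l) + (1)*(C m k c)*(r a k)*(r b l) + (1)*(C m k a)*(r b k)*(r c l) + (-1)*(C m k b)*(r a k)*(r c l)) * (hC_anti d l m) + ((1)*(C d k m)*(r a k)*(r b l) + (-1)*(C d k a)*(r b m)*(r l k) + (1)*(C d k l)*(r a k)*(r b m) + (1)*(C d k b)*(r a m)*(r l k) + (-1)*(C d k l)*(r a m)*(r b k) + (1)*(C d k a)*(r b l)*(r k m) + (1)*(C d k b)*(r a m)*(r k l) + (-1)*(C d k m)*(r a l)*(r b k)) * (hC_anti l m c) + ((1)*(C d k m)*(r b k)*(r c l) + (1)*(C d k c)*(r b m)*(r l k) + (-1)*(C d k l)*(r b m)*(r c k) + (-1)*(C d k b)*(r c m)*(r l k) + (1)*(C d k l)*(r b k)*(r c m) + (1)*(C d k c)*(r b m)*(r k l) + (1)*(C d k b)*(r c l)*(r k m) + (-1)*(C d k m)*(r b l)*(r c k)) * (hC_anti l m a) + ((-1)*(C d k m)*(r a k)*(r c l) + (-1)*(C d k c)*(r a m)*(r l k) + (1)*(C d k l)*(r a m)*(r c k) + (1)*(C d k a)*(r c m)*(r l k) + (-1)*(C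 d k l)*(r a k)*(r c m) + (1)*(C d k c)*(r a l)*(r k m) + (1)*(C d k a)*(r c m)*(r k l) + (1)*(C d k m)*(r a l)*(r c k)) * (hC_anti l m b) + ((-1)*(C l m b)*(r a l)*(r c k) + (1)*(C l m a)*(r b l)*(r c k) + (-1)*(C l m c)*(r a k)*(r b l) + (1)*(C l m b)*(r a k)*(r c l) + (-1)*(C l m a)*(r b k)*(r c l) + (1)*(C l m c)*(r a l)*(r b k) + (1)*(C m l c)*(r a l)*(r b k) + (1)*(C m l a)*(r b l)*(r c k) + (-1)*(C m l b)*(r a l)*(r c k)) * (hC_anti d k m) + ((1)*(C d l m)*(r a l)*(r b k) + (-1)*(C d l a)*(r b m)*(r k l) + (1)*(C d l k)*(r a l)*(r b m) + (1)*(C d l b)*(r a m)*(r k l) + (-1)*(C d l k)*(r a m)*(r b l) + (1)*(C d l a)*(r b k)*(r l m) + (1)*(C d l b)*(r a m)*(r l k) + (-1)*(C d l m)*(r a k)*(r b l)) * (hC_anti k m c) + ((1)*(C d l m)*(r b l)*(r c k) + (1)*(C d l c)*(r b m)*(r k l) + (-1)*(C d l k)*(r b m)*(r c l) + (-1)*(C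 d l b)*(r c m)*(r k l) + (1)*(C d l k)*(r b l)*(r c m) + (1)*(C d l c)*(r b m)*(r l k) + (1)*(C d l b)*(r c k)*(r l m) + (-1)*(C d l m)*(r b k)*(r c l)) * (hC_anti k m a) + ((-1)*(C d l m)*(r a l)*(r c k) + (-1)*(C d l c)*(r a m)*(r k l) + (1)*(C d l k)*(r a m)*(r c l) + (1)*(C d l a)*(r c m)*(r k l) + (-1)*(C d l k)*(r a l)*(r c m) + (1)*(C d l c)*(r a k)*(r l m) + (1)*(C d l a)*(r c m)*(r l k) + (1)*(C d l m)*(r a k)*(r c l)) * (hC_anti k m b) + ((1)*(C k l c)*(r a m)*(r b l) + (-1)*(C k l b)*(r a m)*(r c l) + (1)*(C k l a)*(r b m)*(r c l)) * (hC_anti d m k) + ((1)*(C d l b)*(r a k)*(r c m) + (1)*(C d l b)*(r a m)*(r c k)) * (hC_anti k m l) + ((1)*(C d k b)*(r a m)*(r c l) + (1)*(C d k b)*(r a l)*(r c m)) * (hC_anti l m k) + ((1)*(C d m c)*(C k l a)*(r b k) + (1)*(C d m a)*(C k l b)*(r c k) + (1)*(C d m b)*(C k l c)*(r a k) + (-1)*(C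 d l c)*(C k m b)*(r a k) + (1)*(C d l c)*(C k m a)*(r b k) + (-1)*(C d l a)*(C k m c)*(r b k) + (1)*(C d l a)*(C k m b)*(r c k) + (-1)*(C d l b)*(C k m a)*(r c k) + (1)*(C d l b)*(C k m c)*(r a k) + (-1)*(C d m c)*(C k l b)*(r a k) + (-1)*(C d m a)*(C k l c)*(r b k) + (-1)*(C d m b)*(C k l a)*(r c k)) * (hr_skew l m) + ((1)*(C d m c)*(C k l b)*(r a l) + (1)*(C d m a)*(C k l c)*(r b l) + (1)*(C d m b)*(C k l a)*(r c l) + (-1)*(C d k c)*(C l m b)*(r a l) + (1)*(C d k c)*(C l m a)*(r b l) + (-1)*(C d k a)*(C l m c)*(r b l) + (1)*(C d k a)*(C l m b)*(r c l) + (-1)*(C d k b)*(C l m a)*(r c l) + (1)*(C d k b)*(C l m c)*(r a l) + (-1)*(C d m c)*(C k l a)*(r b l) + (-1)*(C d m a)*(C k l b)*(r c l) + (-1)*(C d m b)*(C k l c)*(r a l)) * (hr_skew k m) + ((1)*(C d l c)*(C k m b)*(r a m) + (1)*(C d l a)*(C k m c)*(r b m) + (1)*(C d l b)*(C k m a)*(r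 c m) + (-1)*(C d l c)*(C k m a)*(r b m) + (-1)*(C d l a)*(C k m b)*(r c m) + (-1)*(C d l b)*(C k m c)*(r a m) + (1)*(C d k c)*(C l m b)*(r a m) + (-1)*(C d k c)*(C l m a)*(r b m) + (1)*(C d k a)*(C l m c)*(r b m) + (-1)*(C d k a)*(C l m b)*(r c m) + (1)*(C d k b)*(C l m a)*(r c m) + (-1)*(C d k b)*(C l m c)*(r a m)) * (hr_skew k l)

/-- If `r` is skew and satisfies the classical Yang–Baxter equation for the
Lie algebra structure constants `C`, then `F a b k = ∑ l, (r a l * C l k b - r b l * C l k a)`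
gives structure constants of a Lie algebra on the dual space. -/
theorem stmt_0 {ι : Type*} [Fintype ι] (C : ι → ι → ι → ℝ)
    (hC_anti : ∀ i j k, C i j k = -(C j i k))
    (hC_jac : ∀ i j l m,
      ∑ k, (C i j k * C k l m + C j l k * C k i m + C l i k * C k j m) = 0)
    (r : ι → ι → ℝ) (hr_skew : ∀ i j, r i j = -(r j i))
    (hCYBE : ∀ a b c,
      ∑ j, ∑ l, (r a j * r b l * C j l c + r b j * r c l * C j l a
        + r c j * r a l * C j l b) = 0)
    (F : ι → ι → ι → ℝ)
    (hF : ∀ a b k, F a b k = ∑ l, (r a l * C l k b - r b l * C l k a)) :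
    (∀ a b k, F a b k = -(F b a k)) ∧
    (∀ a b c d,
      ∑ k, (F a b k * F k c d + F b c k * F k a d + F c a k * F k b d) = 0) := by
  constructor
  · intro a b k
    rw [hF, hF, ← Finset.sum_neg_distrib]
    exact Finset.sum_congr rfl fun l _ => by ring
  · intro a b c d
    -- Step 1: expand the goal sum into a triple sum of `jfD`.
    have hJ : (∑ k, (F a b k * F k c d + F b c k * F k a d + F c a k * F k b d))
        = ∑ k, ∑ l, ∑ m, jfD C r a b c d k l m := by
      refine Finset.sum_congr rfl fun k _ => ?_
      simp only [hF]
      rw [Finset.sum_mul_sum, Finset.sum_mul_sum, Finset.sum_mul_sum,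
        ← Finset.sum_add_distrib, ← Finset.sum_add_distrib]
      refine Finset.sum_congr rfl fun l _ => ?_
      rw [← Finset.sum_add_distrib, ← Finset.sum_add_distrib]
      exact Finset.sum_congr rfl fun m _ => by simp only [jfD]
    -- Step 2: the `z1fD` triple sum vanishes by the CYBE.
    have hz1inner : ∀ m : ι, (∑ l, ∑ k, z1fD C r a b c d k l m) = 0 := by
      intro m
      have e : (∑ l, ∑ k, z1fD C r a b c d k l m)
          = (∑ l, ∑ k, (r b l * r m k * C l k a + r m l * r a k * C l k b
              + r a l * r b k * C l k m)) * C m d c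
            + (∑ l, ∑ k, (r c l * r m k * C l k b + r m l * r b k * C l k c
              + r b l * r c k * C l k m)) * C m d a
            + (∑ l, ∑ k, (r a l * r m k * C l k c + r m l * r c k * C l k a
              + r c l * r a k * C l k m)) * C m d b := by
        rw [Finset.sum_mul, Finset.sum_mul, Finset.sum_mul,
          ← Finset.sum_add_distrib, ← Finset.sum_add_distrib]
        refine Finset.sum_congr rfl fun l _ => ?_
        rw [Finset.sum_mul, Finset.sum_mul, Finset.sum_mul,
          ← Finset.sum_add_distrib, ← Finset.sum_add_distrib]
        exact Finset.sum_congr rfl fun k _ => by simp only [z1fD]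
      rw [e, hCYBE b m a, hCYBE c m b, hCYBE a m c]
      ring
    have hZ1 : (∑ k, ∑ l, ∑ m, z1fD C r a b c d k l m) = 0 := by
      calc (∑ k, ∑ l, ∑ m, z1fD C r a b c d k l m)
          = ∑ k, ∑ m, ∑ l, z1fD C r a b c d k l m :=
            Finset.sum_congr rfl fun _ _ => Finset.sum_comm
        _ = ∑ m, ∑ k, ∑ l, z1fD C r a b c d k l m := Finset.sum_comm
        _ = ∑ m, ∑ l, ∑ k, z1fD C r a b c d k l m :=
            Finset.sum_congr rfl fun _ _ => Finset.sum_comm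
        _ = 0 := Finset.sum_eq_zero fun m _ => hz1inner m
    -- Step 3: the `z2fD` triple sum vanishes by the Jacobi identity for `C`.
    have hz2inner : ∀ l m : ι, (∑ k, z2fD C r a b c d k l m) = 0 := by
      intro l m
      have e : (∑ k, z2fD C r a b c d k l m)
          = -(r a l * r b m) * (∑ k, (C m d k * C k l c + C d l k * C k m c
              + C l m k * C k d c))
            - (r b l * r c m) * (∑ k, (C m d k * C k l a + C d l k * C k m a
              + C l m k * C k d a))
            + (r a l * r c m) * (∑ k, (C m d k * C k l b + C d l k * C k m b
              + C l m k * C k d b)) := by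
        rw [Finset.mul_sum, Finset.mul_sum, Finset.mul_sum,
          ← Finset.sum_sub_distrib, ← Finset.sum_add_distrib]
        exact Finset.sum_congr rfl fun k _ => by simp only [z2fD]
      rw [e, hC_jac m d l c, hC_jac m d l a, hC_jac m d l b]
      ring
    have hZ2 : (∑ k, ∑ l, ∑ m, z2fD C r a b c d k l m) = 0 := by
      calc (∑ k, ∑ l, ∑ m, z2fD C r a b c d k l m)
          = ∑ l, ∑ k, ∑ m, z2fD C r a b c d k l m := Finset.sum_comm
        _ = ∑ l, ∑ m, ∑ k, z2fD C r a b c d k l m :=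
            Finset.sum_congr rfl fun _ _ => Finset.sum_comm
        _ = 0 := Finset.sum_eq_zero fun l _ => Finset.sum_eq_zero fun m _ =>
            hz2inner l m
    -- Step 4: the `GD` triple sum vanishes by symmetrization.
    have hT0 : (∑ k, ∑ l, ∑ m, GD C r a b c d k l m) = 0 := by
      have p1 : (∑ k, ∑ l, ∑ m, GD C r a b c d k l m)
          = ∑ k, ∑ l, ∑ m, GD C r a b c d l k m := Finset.sum_comm
      have p2 : (∑ k, ∑ l, ∑ m, GD C r a b c d k l m)
          = ∑ k, ∑ l, ∑ m, GD C r a b c d k m l :=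
        Finset.sum_congr rfl fun _ _ => Finset.sum_comm
      have p3 : (∑ k, ∑ l, ∑ m, GD C r a b c d k l m)
          = ∑ k, ∑ l, ∑ m, GD C r a b c d l m k := p2.trans Finset.sum_comm
      have p4 : (∑ k, ∑ l, ∑ m, GD C r a b c d k l m)
          = ∑ k, ∑ l, ∑ m, GD C r a b c d m k l :=
        p1.trans (Finset.sum_congr rfl fun _ _ => Finset.sum_comm)
      have p5 : (∑ k, ∑ l, ∑ m, GD C r a b c d k l m)
          = ∑ k, ∑ l, ∑ m, GD C r a b c d m l k :=
        p3.trans (Finset.sum_congr rfl fun _ _ => Finset.sum_comm)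
      have sum6 : (∑ k, ∑ l, ∑ m,
          (GD C r a b c d k l m + GD C r a b c d k m l + GD C r a b c d l k m
            + GD C r a b c d l m k + GD C r a b c d m k l
            + GD C r a b c d m l k)) = 0 :=
        Finset.sum_eq_zero fun k _ => Finset.sum_eq_zero fun l _ =>
          Finset.sum_eq_zero fun m _ =>
            key_pointwise C r hC_anti hr_skew a b c d k l m
      simp only [Finset.sum_add_distrib] at sum6
      rw [← p2, ← p1, ← p3, ← p4, ← p5] at sum6
      linarith
    -- Assemble.
    have hsplit : (∑ k, ∑ l, ∑ m, jfD C r a b c d k l m)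
        = (∑ k, ∑ l, ∑ m, GD C r a b c d k l m)
          + (∑ k, ∑ l, ∑ m, z1fD C r a b c d k l m)
          + (∑ k, ∑ l, ∑ m, z2fD C r a b c d k l m) := by
      rw [← Finset.sum_add_distrib, ← Finset.sum_add_distrib]
      refine Finset.sum_congr rfl fun k _ => ?_
      rw [← Finset.sum_add_distrib, ← Finset.sum_add_distrib]
      refine Finset.sum_congr rfl fun l _ => ?_
      rw [← Finset.sum_add_distrib, ← Finset.sum_add_distrib]
      refine Finset.sum_congr rfl fun m _ => ?_
      simp only [GD]; ring
    rw [hJ, hsplit, hZ1, hZ2, hT0]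
    norm_num
end

section
/- Let X be an action of the Lie algebra with structure constants C on A by derivations, and let r : ι → ι → ℝ be skew and satisfy the CYBE for C. Define B : A → A → A by B f g = Σ_{i,j} (r i j) • ((X i f) * (X j g)). Then B is antisymmetric, B f g = −(B g f), and satisfies the Jacobi identity B f (B g h) + B g (B h f) + B h (B f g) = 0 for all f, g, h in A (so B is a Poisson bracket on A). -/
/-- Given an action `X` of the Lie algebra with structure constants `C` on a
commutative `ℝ`-algebra `A` by derivations, and a skew solution `r` of the CYBE for `C`,
the bracket `B f g = ∑ i j, (r i j) • (X i f * X j g)` is a Poisson bracket on `A`. -/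
theorem stmt_1 {ι : Type*} [Fintype ι] {A : Type*} [CommRing A] [Algebra ℝ A]
    (C : ι → ι → ι → ℝ)
    (hC_anti : ∀ i j k, C i j k = -(C j i k))
    (hC_jac : ∀ i j l m,
      ∑ k, (C i j k * C k l m + C j l k * C k i m + C l i k * C k j m) = 0)
    (X : ι → Derivation ℝ A A)
    (hX : ∀ i j, ∀ f : A, X i (X j f) - X j (X i f) = ∑ k, C i j k • X k f)
    (r : ι → ι → ℝ) (hr_skew : ∀ i j, r i j = -(r j i))
    (hCYBE : ∀ a b c,
      ∑ j, ∑ l, (r a j * r b l * C j l c + r b j * r c l * C j l a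
        + r c j * r a l * C j l b) = 0)
    (B : A → A → A)
    (hB : ∀ f g, B f g = ∑ i, ∑ j, r i j • (X i f * X j g)) :
    (∀ f g, B f g = -(B g f)) ∧
    (∀ f g h, B f (B g h) + B g (B h f) + B h (B f g) = 0) := by
  constructor
  · -- antisymmetry
    intro f g
    have hadd : B f g + B g f = 0 := by
      rw [hB f g, hB g f]
      rw [show (∑ i, ∑ j, r i j • (X i g * X j f)) = ∑ i, ∑ j, r j i • (X j g * X i f)
        from Finset.sum_comm]
      rw [← Finset.sum_add_distrib]
      calc (∑ i, ((∑ j, r i j • (X i f * X j g)) + ∑ j, r j i • (X j g * X i f)))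
          = ∑ i, ∑ j : ι, (r i j • (X i f * X j g) + r j i • (X j g * X i f)) :=
            Finset.sum_congr rfl fun i _ => (Finset.sum_add_distrib).symm
        _ = ∑ i, ∑ j : ι, (0 : A) := Finset.sum_congr rfl fun i _ =>
            Finset.sum_congr rfl fun j _ => by
              rw [hr_skew j i]
              simp only [Algebra.smul_def, map_neg]
              ring
        _ = 0 := by simp
    exact eq_neg_of_add_eq_zero_left hadd
  · -- Jacobi
    intro f g h
    -- expansion of B x (B y z) into a quadruple sum
    have expandB : ∀ x y z : A, B x (B y z) =
        ∑ i, ∑ j, ∑ k, ∑ l, algebraMap ℝ A (r i j) * algebraMap ℝ A (r k l) *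
          (X i x * X j (X k y) * X l z + X i x * X k y * X j (X l z)) := by
      intro x y z
      rw [hB, hB]
      refine Finset.sum_congr rfl fun i _ => Finset.sum_congr rfl fun j _ => ?_
      rw [map_sum]
      simp only [map_sum, Derivation.map_smul, Derivation.leibniz, smul_eq_mul,
        Finset.mul_sum, Finset.smul_sum]
      refine Finset.sum_congr rfl fun k _ => Finset.sum_congr rfl fun l _ => ?_
      simp only [Algebra.smul_def]
      ring
    -- splitting the quadruple sum into two
    have split : ∀ x y z : A,
        (∑ i, ∑ j, ∑ k, ∑ l, algebraMap ℝ A (r i j) * algebraMap ℝ A (r k l) *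
          (X i x * X j (X k y) * X l z))
        + (∑ i, ∑ j, ∑ k, ∑ l, algebraMap ℝ A (r i j) * algebraMap ℝ A (r k l) *
          (X i x * X k y * X j (X l z)))
        = ∑ i, ∑ j, ∑ k, ∑ l, algebraMap ℝ A (r i j) * algebraMap ℝ A (r k l) *
          (X i x * X j (X k y) * X l z + X i x * X k y * X j (X l z)) := by
      intro x y z
      rw [← Finset.sum_add_distrib]
      refine Finset.sum_congr rfl fun i _ => ?_
      rw [← Finset.sum_add_distrib]
      refine Finset.sum_congr rfl fun j _ => ?_
      rw [← Finset.sum_add_distrib]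
      refine Finset.sum_congr rfl fun k _ => ?_
      rw [← Finset.sum_add_distrib]
      refine Finset.sum_congr rfl fun l _ => ?_
      rw [mul_add]
    -- key lemma
    have key : ∀ u v w : A,
        (∑ a, ∑ p, ∑ q, ∑ b, algebraMap ℝ A (r a p) * algebraMap ℝ A (r q b) *
          (X a u * X p (X q v) * X b w))
        + (∑ b, ∑ p, ∑ a, ∑ q, algebraMap ℝ A (r b p) * algebraMap ℝ A (r a q) *
          (X b w * X a u * X p (X q v)))
        = ∑ a, ∑ m, ∑ b, algebraMap ℝ A (∑ p, ∑ q, -(r a p * r b q * C p q m)) *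
          (X a u * X m v * X b w) := by
      intro u v w
      have h1 : (∑ a, ∑ p, ∑ q, ∑ b, algebraMap ℝ A (r a p) * algebraMap ℝ A (r q b) *
            (X a u * X p (X q v) * X b w))
          = ∑ a, ∑ b, ∑ p, ∑ q, algebraMap ℝ A (r a p) * algebraMap ℝ A (r q b) *
            (X a u * X p (X q v) * X b w) := by
        refine Finset.sum_congr rfl fun a _ => ?_
        rw [show (∑ p, ∑ q, ∑ b : ι, algebraMap ℝ A (r a p) * algebraMap ℝ A (r q b) *
            (X a u * X p (X q v) * X b w))
          = ∑ p, ∑ b, ∑ q, algebraMap ℝ A (r a p) * algebraMap ℝ A (r q b) *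
            (X a u * X p (X q v) * X b w) from Finset.sum_congr rfl fun p _ => Finset.sum_comm]
        exact Finset.sum_comm
      have h2 : (∑ b, ∑ p, ∑ a, ∑ q, algebraMap ℝ A (r b p) * algebraMap ℝ A (r a q) *
            (X b w * X a u * X p (X q v)))
          = ∑ a, ∑ b, ∑ p, ∑ q, algebraMap ℝ A (r b q) * algebraMap ℝ A (r a p) *
            (X b w * X a u * X q (X p v)) := by
        rw [show (∑ b, ∑ p, ∑ a, ∑ q, algebraMap ℝ A (r b p) * algebraMap ℝ A (r a q) *
            (X b w * X a u * X p (X q v)))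
          = ∑ b, ∑ a, ∑ p, ∑ q, algebraMap ℝ A (r b p) * algebraMap ℝ A (r a q) *
            (X b w * X a u * X p (X q v)) from Finset.sum_congr rfl fun b _ => Finset.sum_comm]
        rw [Finset.sum_comm]
        refine Finset.sum_congr rfl fun a _ => Finset.sum_congr rfl fun b _ => Finset.sum_comm
      rw [h1, h2]
      simp only [← Finset.sum_add_distrib]
      refine Finset.sum_congr rfl fun a _ => ?_
      have h3 : (∑ m, ∑ b, algebraMap ℝ A (∑ p, ∑ q, -(r a p * r b q * C p q m)) *
            (X a u * X m v * X b w))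
          = ∑ b, ∑ p, ∑ q, ∑ m, algebraMap ℝ A (-(r a p * r b q * C p q m)) *
            (X a u * X m v * X b w) := by
        rw [Finset.sum_comm]
        refine Finset.sum_congr rfl fun b _ => ?_
        rw [show (∑ m, algebraMap ℝ A (∑ p, ∑ q, -(r a p * r b q * C p q m)) *
            (X a u * X m v * X b w))
          = ∑ m, ∑ p, ∑ q, algebraMap ℝ A (-(r a p * r b q * C p q m)) *
            (X a u * X m v * X b w) from Finset.sum_congr rfl fun m _ => by
              simp [map_sum, Finset.sum_mul]]
        rw [show (∑ m, ∑ p, ∑ q, algebraMap ℝ A (-(r a p * r b q * C p q m)) *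
            (X a u * X m v * X b w))
          = ∑ p, ∑ m, ∑ q, algebraMap ℝ A (-(r a p * r b q * C p q m)) *
            (X a u * X m v * X b w) from Finset.sum_comm]
        exact Finset.sum_congr rfl fun p _ => Finset.sum_comm
      rw [h3]
      refine Finset.sum_congr rfl fun b _ => Finset.sum_congr rfl fun p _ =>
        Finset.sum_congr rfl fun q _ => ?_
      have e : (X q (X p v) : A) - X p (X q v) = ∑ m, algebraMap ℝ A (C q p m) * X m v := by
        simpa [Algebra.smul_def] using hX q p v
      calc algebraMap ℝ A (r a p) * algebraMap ℝ A (r q b) * (X a u * X p (X q v) * X b w)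
            + algebraMap ℝ A (r b q) * algebraMap ℝ A (r a p) * (X b w * X a u * X q (X p v))
          = algebraMap ℝ A (r a p) * algebraMap ℝ A (r b q) *
              (((X q (X p v) : A) - X p (X q v)) * (X a u * X b w)) := by
            rw [hr_skew q b, map_neg]; ring
        _ = algebraMap ℝ A (r a p) * algebraMap ℝ A (r b q) *
              ((∑ m, algebraMap ℝ A (C q p m) * X m v) * (X a u * X b w)) := by rw [e]
        _ = ∑ m, algebraMap ℝ A (-(r a p * r b q * C p q m)) * (X a u * X m v * X b w) := by
            simp only [Finset.sum_mul, Finset.mul_sum]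
            refine Finset.sum_congr rfl fun m _ => ?_
            rw [hC_anti p q m]
            simp only [map_neg, map_mul, neg_neg]
            ring
    -- generic cyclic reordering of a triple sum
    have reorder : ∀ F : ι → ι → ι → A,
        (∑ a, ∑ m, ∑ b, F a m b) = ∑ a, ∑ m, ∑ b, F b a m := by
      intro F
      calc (∑ a, ∑ m, ∑ b, F a m b) = ∑ m, ∑ a, ∑ b, F a m b := Finset.sum_comm
        _ = ∑ m, ∑ b, ∑ a, F a m b := Finset.sum_congr rfl fun m _ => Finset.sum_comm
    -- sum of the three K-terms is zero by CYBE
    have hK : (∑ a, ∑ m, ∑ b, algebraMap ℝ A (∑ p, ∑ q, -(r a p * r b q * C p q m)) *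
          (X a f * X m g * X b h))
        + (∑ a, ∑ m, ∑ b, algebraMap ℝ A (∑ p, ∑ q, -(r a p * r b q * C p q m)) *
          (X a g * X m h * X b f))
        + (∑ a, ∑ m, ∑ b, algebraMap ℝ A (∑ p, ∑ q, -(r a p * r b q * C p q m)) *
          (X a h * X m f * X b g)) = 0 := by
      have R2a : (∑ a, ∑ m, ∑ b, algebraMap ℝ A (∑ p, ∑ q, -(r a p * r b q * C p q m)) *
            (X a g * X m h * X b f))
          = ∑ a, ∑ m, ∑ b, algebraMap ℝ A (∑ p, ∑ q, -(r b p * r m q * C p q a)) *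
            (X b g * X a h * X m f) :=
        reorder (fun a m b => algebraMap ℝ A (∑ p, ∑ q, -(r a p * r b q * C p q m)) *
            (X a g * X m h * X b f))
      have R2b : (∑ a, ∑ m, ∑ b, algebraMap ℝ A (∑ p, ∑ q, -(r b p * r m q * C p q a)) *
            (X b g * X a h * X m f))
          = ∑ a, ∑ m, ∑ b, algebraMap ℝ A (∑ p, ∑ q, -(r m p * r a q * C p q b)) *
            (X m g * X b h * X a f) :=
        reorder (fun a m b => algebraMap ℝ A (∑ p, ∑ q, -(r b p * r m q * C p q a)) *
            (X b g * X a h * X m f))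
      have R3 : (∑ a, ∑ m, ∑ b, algebraMap ℝ A (∑ p, ∑ q, -(r a p * r b q * C p q m)) *
            (X a h * X m f * X b g))
          = ∑ a, ∑ m, ∑ b, algebraMap ℝ A (∑ p, ∑ q, -(r b p * r m q * C p q a)) *
            (X b h * X a f * X m g) :=
        reorder (fun a m b => algebraMap ℝ A (∑ p, ∑ q, -(r a p * r b q * C p q m)) *
            (X a h * X m f * X b g))
      rw [R2a, R2b, R3]
      simp only [← Finset.sum_add_distrib]
      have final : ∀ a m b : ι,
          algebraMap ℝ A (∑ p, ∑ q, -(r a p * r b q * C p q m)) * (X a f * X m g * X b h)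
          + algebraMap ℝ A (∑ p, ∑ q, -(r m p * r a q * C p q b)) * (X m g * X b h * X a f)
          + algebraMap ℝ A (∑ p, ∑ q, -(r b p * r m q * C p q a)) * (X b h * X a f * X m g)
          = 0 := by
        intro a m b
        have hc : (∑ p, ∑ q, -(r a p * r b q * C p q m))
            + (∑ p, ∑ q, -(r m p * r a q * C p q b))
            + (∑ p, ∑ q, -(r b p * r m q * C p q a)) = 0 := by
          have hcy := hCYBE a b m
          have hz : ((∑ p, ∑ q, -(r a p * r b q * C p q m))
              + (∑ p, ∑ q, -(r m p * r a q * C p q b))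
              + (∑ p, ∑ q, -(r b p * r m q * C p q a)))
              + (∑ p, ∑ q, (r a p * r b q * C p q m + r b p * r m q * C p q a
                + r m p * r a q * C p q b)) = 0 := by
            simp only [← Finset.sum_add_distrib]
            calc (∑ p, ∑ q : ι, (-(r a p * r b q * C p q m) + -(r m p * r a q * C p q b)
                  + -(r b p * r m q * C p q a) + (r a p * r b q * C p q m
                  + r b p * r m q * C p q a + r m p * r a q * C p q b)))
                = ∑ p, ∑ q : ι, (0 : ℝ) := Finset.sum_congr rfl fun p _ =>
                  Finset.sum_congr rfl fun q _ => by ring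
              _ = 0 := by simp
          linarith [hz, hcy]
        have hc' := congrArg (algebraMap ℝ A) hc
        rw [map_add, map_add, map_zero] at hc'
        linear_combination (X a f * X m g * X b h) * hc'
      refine Eq.trans (Finset.sum_congr rfl fun a _ => Finset.sum_congr rfl fun m _ =>
        Finset.sum_congr rfl fun b _ => final a m b) (by simp)
    -- put it together
    have e1 := expandB f g h
    have e2 := expandB g h f
    have e3 := expandB h f g
    have s1 := split f g h
    have s2 := split g h f
    have s3 := split h f g
    have j1 := key f g h
    have j2 := key g h f
    have j3 := key h f g
    linear_combination e1 + e2 + e3 - s1 - s2 - s3 + j1 + j2 + j3 + hK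
end

section
/- Let X be an action of the Lie algebra with structure constants C on A by derivations, and let r : ι → ι → A satisfy r i j = −(r j i). Assume the generalized (field-dependent) Yang–Baxter condition: for all a, b, c, the total antisymmetrization over the triple of indices (a, b, c) of the expression E(a, b, c) = Σ_{l,m} (r l a * (C l m c) • (r b m)) + Σ_l (r l a * X l (r b c)) vanishes, i.e., Σ over the six permutations σ of (a, b, c), with the sign of σ, of E(σ(a), σ(b), σ(c)) equals 0. Then the bracket B f g = Σ_{i,j} (X i f) * (r i j) * (X j g) is antisymmetric and satisfies the Jacobi identity B f (B g h) + B g (B h f) + B h (B f g) = 0 for all f, g, h in A. -/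
private lemma flat4 {ι : Type*} [Fintype ι] {M : Type*} [AddCommMonoid M]
    (F : ι → ι → ι → ι → M) :
    ∑ p : ι × ι × ι × ι, F p.1 p.2.1 p.2.2.1 p.2.2.2 = ∑ i, ∑ j, ∑ k, ∑ l, F i j k l := by
  simp [Fintype.sum_prod_type]

private lemma flat5 {ι : Type*} [Fintype ι] {M : Type*} [AddCommMonoid M]
    (F : ι → ι → ι → ι → ι → M) :
    ∑ p : ι × ι × ι × ι × ι, F p.1 p.2.1 p.2.2.1 p.2.2.2.1 p.2.2.2.2
      = ∑ i, ∑ j, ∑ k, ∑ l, ∑ m, F i j k l m := by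
  simp [Fintype.sum_prod_type]

set_option maxHeartbeats 3200000 in
/-- For a field-dependent `r`-matrix `r : ι → ι → A` with `r i j = -(r j i)`
satisfying the generalized (field-dependent) Yang–Baxter condition (the total
antisymmetrization over `(a,b,c)` of
`E a b c = ∑ l m, r l a * ((C l m c) • r b m) + ∑ l, r l a * X l (r b c)` vanishes),
the bracket `B f g = ∑ i j, (X i f) * (r i j) * (X j g)` is antisymmetric and satisfies
the Jacobi identity. -/
theorem stmt_2 {ι : Type*} [Fintype ι] {A : Type*} [CommRing A] [Algebra ℝ A]
    (C : ι → ι → ι → ℝ)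
    (hC_anti : ∀ i j k, C i j k = -(C j i k))
    (hC_jac : ∀ i j l m,
      ∑ k, (C i j k * C k l m + C j l k * C k i m + C l i k * C k j m) = 0)
    (X : ι → Derivation ℝ A A)
    (hX : ∀ i j, ∀ f : A, X i (X j f) - X j (X i f) = ∑ k, C i j k • X k f)
    (r : ι → ι → A) (hr_skew : ∀ i j, r i j = -(r j i))
    (E : ι → ι → ι → A)
    (hE : ∀ a b c, E a b c =
      (∑ l, ∑ m, r l a * ((C l m c) • r b m)) + ∑ l, r l a * X l (r b c))
    (hYB : ∀ a b c,
      E a b c - E a c b + E b c a - E b a c + E c a b - E c b a = 0)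
    (B : A → A → A)
    (hB : ∀ f g, B f g = ∑ i, ∑ j, (X i f) * (r i j) * (X j g)) :
    (∀ f g, B f g = -(B g f)) ∧
    (∀ f g h, B f (B g h) + B g (B h f) + B h (B f g) = 0) := by
  have hexp : ∀ u v : A, ∀ j, (X j) (B u v)
      = ∑ k, ∑ l, (X j (X k u) * r k l * X l v + X k u * X j (r k l) * X l v
          + X k u * r k l * X j (X l v)) := by
    intro u v j
    rw [hB, map_sum]
    refine Finset.sum_congr rfl fun k _ => ?_
    rw [map_sum]
    refine Finset.sum_congr rfl fun l _ => ?_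
    simp only [Derivation.leibniz, smul_eq_mul]
    ring
  have expand : ∀ u v w : A, B u (B v w) =
      (∑ i, ∑ j, ∑ k, ∑ l, X i u * r i j * (X j (X k v) * r k l * X l w)) +
      (∑ i, ∑ j, ∑ k, ∑ l, X i u * r i j * (X k v * X j (r k l) * X l w)) +
      (∑ i, ∑ j, ∑ k, ∑ l, X i u * r i j * (X k v * r k l * X j (X l w))) := by
    intro u v w
    rw [hB]
    simp only [hexp, Finset.mul_sum, mul_add, Finset.sum_add_distrib]
  have pair : ∀ u v w : A,
      (∑ i, ∑ j, ∑ k, ∑ l, X i u * r i j * (X j (X k v) * r k l * X l w)) +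
      (∑ i, ∑ j, ∑ k, ∑ l, X i w * r i j * (X k u * r k l * X j (X l v))) =
      ∑ i, ∑ j, ∑ k, ∑ l, ∑ n, C j k n • (X i u * r i j * r k l * X n v * X l w) := by
    intro u v w
    have hC3 : (∑ i, ∑ j, ∑ k, ∑ l, X i w * r i j * (X k u * r k l * X j (X l v)))
        = ∑ i, ∑ j, ∑ k, ∑ l, -(X i u * r i j * r k l * X l w * X k (X j v)) := by
      calc (∑ i, ∑ j, ∑ k, ∑ l, X i w * r i j * (X k u * r k l * X j (X l v)))
          = ∑ p : ι × ι × ι × ι,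
              X p.1 w * r p.1 p.2.1 * (X p.2.2.1 u * r p.2.2.1 p.2.2.2 * X p.2.1 (X p.2.2.2 v)) :=
            (flat4 (fun i j k l => X i w * r i j * (X k u * r k l * X j (X l v)))).symm
        _ = ∑ p : ι × ι × ι × ι,
              -(X p.1 u * r p.1 p.2.1 * r p.2.2.1 p.2.2.2 * X p.2.2.2 w * X p.2.2.1 (X p.2.1 v)) := by
            refine Fintype.sum_equiv
              ⟨fun p => (p.2.2.1, p.2.2.2, p.2.1, p.1), fun p => (p.2.2.2, p.2.2.1, p.1, p.2.1),
                fun p => rfl, fun p => rfl⟩ _ _ ?_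
            rintro ⟨i, j, k, l⟩
            dsimp only [Equiv.coe_fn_mk]
            rw [hr_skew j i]
            ring
        _ = ∑ i, ∑ j, ∑ k, ∑ l, -(X i u * r i j * r k l * X l w * X k (X j v)) :=
            flat4 (fun i j k l => -(X i u * r i j * r k l * X l w * X k (X j v)))
    rw [hC3]
    simp only [← Finset.sum_add_distrib]
    refine Finset.sum_congr rfl fun i _ => Finset.sum_congr rfl fun j _ =>
      Finset.sum_congr rfl fun k _ => Finset.sum_congr rfl fun l _ => ?_
    have hx := hX j k v
    calc X i u * r i j * (X j (X k v) * r k l * X l w)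
          + -(X i u * r i j * r k l * X l w * X k (X j v))
        = (X i u * r i j * r k l * X l w) * (X j (X k v) - X k (X j v)) := by ring
      _ = (X i u * r i j * r k l * X l w) * (∑ n, C j k n • X n v) := by rw [hx]
      _ = ∑ n, C j k n • (X i u * r i j * r k l * X n v * X l w) := by
          rw [Finset.mul_sum]
          refine Finset.sum_congr rfl fun n _ => ?_
          simp only [Algebra.smul_def]
          ring
  constructor
  · intro f g
    rw [hB f g, hB g f, Finset.sum_comm, eq_neg_iff_add_eq_zero, ← Finset.sum_add_distrib]
    refine Finset.sum_eq_zero fun a _ => ?_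
    rw [← Finset.sum_add_distrib]
    refine Finset.sum_eq_zero fun b _ => ?_
    rw [hr_skew a b]
    ring
  · intro f g h
    set A1 : A := ∑ i, ∑ j, ∑ k, ∑ l, X i f * r i j * (X j (X k g) * r k l * X l h) with hA1
    set A2 : A := ∑ i, ∑ j, ∑ k, ∑ l, X i f * r i j * (X k g * X j (r k l) * X l h) with hA2
    set A3 : A := ∑ i, ∑ j, ∑ k, ∑ l, X i f * r i j * (X k g * r k l * X j (X l h)) with hA3
    set B1 : A := ∑ i, ∑ j, ∑ k, ∑ l, X i g * r i j * (X j (X k h) * r k l * X l f) with hB1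
    set B2 : A := ∑ i, ∑ j, ∑ k, ∑ l, X i g * r i j * (X k h * X j (r k l) * X l f) with hB2
    set B3 : A := ∑ i, ∑ j, ∑ k, ∑ l, X i g * r i j * (X k h * r k l * X j (X l f)) with hB3
    set C1 : A := ∑ i, ∑ j, ∑ k, ∑ l, X i h * r i j * (X j (X k f) * r k l * X l g) with hC1
    set C2 : A := ∑ i, ∑ j, ∑ k, ∑ l, X i h * r i j * (X k f * X j (r k l) * X l g) with hC2
    set C3 : A := ∑ i, ∑ j, ∑ k, ∑ l, X i h * r i j * (X k f * r k l * X j (X l g)) with hC3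
    set Pg : A := ∑ i, ∑ j, ∑ k, ∑ l, ∑ n, C j k n • (X i f * r i j * r k l * X n g * X l h) with hPg
    set Ph : A := ∑ i, ∑ j, ∑ k, ∑ l, ∑ n, C j k n • (X i g * r i j * r k l * X n h * X l f) with hPh
    set Pf : A := ∑ i, ∑ j, ∑ k, ∑ l, ∑ n, C j k n • (X i h * r i j * r k l * X n f * X l g) with hPf
    set Tc1 : A := ∑ a, ∑ b, ∑ c, ∑ l, ∑ m,
      X a f * X b g * X c h * (r l a * (C l m c • r b m)) with hTc1
    set Tc2 : A := ∑ a, ∑ b, ∑ c, ∑ l, ∑ m,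
      X a f * X b g * X c h * (r l a * (C l m b • r c m)) with hTc2
    set Tc3 : A := ∑ a, ∑ b, ∑ c, ∑ l, ∑ m,
      X a f * X b g * X c h * (r l b * (C l m a • r c m)) with hTc3
    set Tc4 : A := ∑ a, ∑ b, ∑ c, ∑ l, ∑ m,
      X a f * X b g * X c h * (r l b * (C l m c • r a m)) with hTc4
    set Tc5 : A := ∑ a, ∑ b, ∑ c, ∑ l, ∑ m,
      X a f * X b g * X c h * (r l c * (C l m b • r a m)) with hTc5
    set Tc6 : A := ∑ a, ∑ b, ∑ c, ∑ l, ∑ m,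
      X a f * X b g * X c h * (r l c * (C l m a • r b m)) with hTc6
    set Td1 : A := ∑ a, ∑ b, ∑ c, ∑ l,
      X a f * X b g * X c h * (r l a * X l (r b c)) with hTd1
    set Td2 : A := ∑ a, ∑ b, ∑ c, ∑ l,
      X a f * X b g * X c h * (r l a * X l (r c b)) with hTd2
    set Td3 : A := ∑ a, ∑ b, ∑ c, ∑ l,
      X a f * X b g * X c h * (r l b * X l (r c a)) with hTd3
    set Td4 : A := ∑ a, ∑ b, ∑ c, ∑ l,
      X a f * X b g * X c h * (r l b * X l (r a c)) with hTd4
    set Td5 : A := ∑ a, ∑ b, ∑ c, ∑ l,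
      X a f * X b g * X c h * (r l c * X l (r a b)) with hTd5
    set Td6 : A := ∑ a, ∑ b, ∑ c, ∑ l,
      X a f * X b g * X c h * (r l c * X l (r b a)) with hTd6
    -- expansions of the three double brackets
    have e1 : B f (B g h) = A1 + A2 + A3 := by rw [hA1, hA2, hA3]; exact expand f g h
    have e2 : B g (B h f) = B1 + B2 + B3 := by rw [hB1, hB2, hB3]; exact expand g h f
    have e3 : B h (B f g) = C1 + C2 + C3 := by rw [hC1, hC2, hC3]; exact expand h f g
    -- pairing of second-derivative terms
    have pg : A1 + C3 = Pg := by rw [hA1, hC3, hPg]; exact pair f g h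
    have ph : B1 + A3 = Ph := by rw [hB1, hA3, hPh]; exact pair g h f
    have pf : C1 + B3 = Pf := by rw [hC1, hB3, hPf]; exact pair h f g
    -- identify paired C-terms with YB C-terms
    have cg : Pg = Tc2 := by
      rw [hPg, hTc2]
      calc (∑ i, ∑ j, ∑ k, ∑ l, ∑ n, C j k n • (X i f * r i j * r k l * X n g * X l h))
          = ∑ p : ι × ι × ι × ι × ι, C p.2.1 p.2.2.1 p.2.2.2.2 •
              (X p.1 f * r p.1 p.2.1 * r p.2.2.1 p.2.2.2.1 * X p.2.2.2.2 g * X p.2.2.2.1 h) :=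
            (flat5 (fun i j k l n => C j k n • (X i f * r i j * r k l * X n g * X l h))).symm
        _ = ∑ p : ι × ι × ι × ι × ι, X p.1 f * X p.2.1 g * X p.2.2.1 h *
              (r p.2.2.2.1 p.1 * (C p.2.2.2.1 p.2.2.2.2 p.2.1 • r p.2.2.1 p.2.2.2.2)) := by
            refine Fintype.sum_equiv
              ⟨fun p => (p.1, p.2.2.2.2, p.2.2.2.1, p.2.1, p.2.2.1),
               fun p => (p.1, p.2.2.2.1, p.2.2.2.2, p.2.2.1, p.2.1),
               fun p => rfl, fun p => rfl⟩ _ _ ?_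
            rintro ⟨i, j, k, l, n⟩
            dsimp only [Equiv.coe_fn_mk]
            rw [hr_skew j i, hr_skew l k]
            simp only [Algebra.smul_def]
            ring
        _ = ∑ a, ∑ b, ∑ c, ∑ l, ∑ m, X a f * X b g * X c h * (r l a * (C l m b • r c m)) :=
            flat5 (fun a b c l m => X a f * X b g * X c h * (r l a * (C l m b • r c m)))
    have ch : Ph = Tc4 := by
      rw [hPh, hTc4]
      calc (∑ i, ∑ j, ∑ k, ∑ l, ∑ n, C j k n • (X i g * r i j * r k l * X n h * X l f))
          = ∑ p : ι × ι × ι × ι × ι, C p.2.1 p.2.2.1 p.2.2.2.2 •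
              (X p.1 g * r p.1 p.2.1 * r p.2.2.1 p.2.2.2.1 * X p.2.2.2.2 h * X p.2.2.2.1 f) :=
            (flat5 (fun i j k l n => C j k n • (X i g * r i j * r k l * X n h * X l f))).symm
        _ = ∑ p : ι × ι × ι × ι × ι, X p.1 f * X p.2.1 g * X p.2.2.1 h *
              (r p.2.2.2.1 p.2.1 * (C p.2.2.2.1 p.2.2.2.2 p.2.2.1 • r p.1 p.2.2.2.2)) := by
            refine Fintype.sum_equiv
              ⟨fun p => (p.2.2.2.1, p.1, p.2.2.2.2, p.2.1, p.2.2.1),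
               fun p => (p.2.1, p.2.2.2.1, p.2.2.2.2, p.1, p.2.2.1),
               fun p => rfl, fun p => rfl⟩ _ _ ?_
            rintro ⟨i, j, k, l, n⟩
            dsimp only [Equiv.coe_fn_mk]
            rw [hr_skew j i, hr_skew l k]
            simp only [Algebra.smul_def]
            ring
        _ = ∑ a, ∑ b, ∑ c, ∑ l, ∑ m, X a f * X b g * X c h * (r l b * (C l m c • r a m)) :=
            flat5 (fun a b c l m => X a f * X b g * X c h * (r l b * (C l m c • r a m)))
    have cf : Pf = Tc6 := by
      rw [hPf, hTc6]
      calc (∑ i, ∑ j, ∑ k, ∑ l, ∑ n, C j k n • (X i h * r i j * r k l * X n f * X l g))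
          = ∑ p : ι × ι × ι × ι × ι, C p.2.1 p.2.2.1 p.2.2.2.2 •
              (X p.1 h * r p.1 p.2.1 * r p.2.2.1 p.2.2.2.1 * X p.2.2.2.2 f * X p.2.2.2.1 g) :=
            (flat5 (fun i j k l n => C j k n • (X i h * r i j * r k l * X n f * X l g))).symm
        _ = ∑ p : ι × ι × ι × ι × ι, X p.1 f * X p.2.1 g * X p.2.2.1 h *
              (r p.2.2.2.1 p.2.2.1 * (C p.2.2.2.1 p.2.2.2.2 p.1 • r p.2.1 p.2.2.2.2)) := by
            refine Fintype.sum_equiv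
              ⟨fun p => (p.2.2.2.2, p.2.2.2.1, p.1, p.2.1, p.2.2.1),
               fun p => (p.2.2.1, p.2.2.2.1, p.2.2.2.2, p.2.1, p.1),
               fun p => rfl, fun p => rfl⟩ _ _ ?_
            rintro ⟨i, j, k, l, n⟩
            dsimp only [Equiv.coe_fn_mk]
            rw [hr_skew j i, hr_skew l k]
            simp only [Algebra.smul_def]
            ring
        _ = ∑ a, ∑ b, ∑ c, ∑ l, ∑ m, X a f * X b g * X c h * (r l c * (C l m a • r b m)) :=
            flat5 (fun a b c l m => X a f * X b g * X c h * (r l c * (C l m a • r b m)))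
    -- antisymmetry pairings among YB C-terms
    have p14 : Tc1 + Tc4 = 0 := by
      rw [hTc1, hTc4]
      have key : (∑ a, ∑ b, ∑ c, ∑ l, ∑ m,
            X a f * X b g * X c h * (r l b * (C l m c • r a m)))
          = ∑ a, ∑ b, ∑ c, ∑ l, ∑ m,
            -(X a f * X b g * X c h * (r l a * (C l m c • r b m))) := by
        calc (∑ a, ∑ b, ∑ c, ∑ l, ∑ m, X a f * X b g * X c h * (r l b * (C l m c • r a m)))
            = ∑ p : ι × ι × ι × ι × ι, X p.1 f * X p.2.1 g * X p.2.2.1 h *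
                (r p.2.2.2.1 p.2.1 * (C p.2.2.2.1 p.2.2.2.2 p.2.2.1 • r p.1 p.2.2.2.2)) :=
              (flat5 (fun a b c l m => X a f * X b g * X c h * (r l b * (C l m c • r a m)))).symm
          _ = ∑ p : ι × ι × ι × ι × ι, -(X p.1 f * X p.2.1 g * X p.2.2.1 h *
                (r p.2.2.2.1 p.1 * (C p.2.2.2.1 p.2.2.2.2 p.2.2.1 • r p.2.1 p.2.2.2.2))) := by
              refine Fintype.sum_equiv
                ⟨fun p => (p.1, p.2.1, p.2.2.1, p.2.2.2.2, p.2.2.2.1),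
                 fun p => (p.1, p.2.1, p.2.2.1, p.2.2.2.2, p.2.2.2.1),
                 fun p => rfl, fun p => rfl⟩ _ _ ?_
              rintro ⟨a, b, c, l, m⟩
              dsimp only [Equiv.coe_fn_mk]
              rw [hC_anti m l, hr_skew m a, hr_skew b l]
              simp only [Algebra.smul_def, map_neg]
              ring
          _ = ∑ a, ∑ b, ∑ c, ∑ l, ∑ m,
                -(X a f * X b g * X c h * (r l a * (C l m c • r b m))) :=
              flat5 (fun a b c l m => -(X a f * X b g * X c h * (r l a * (C l m c • r b m))))
      rw [key]
      simp only [← Finset.sum_add_distrib, add_neg_cancel, Finset.sum_const_zero]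
    have p36 : Tc3 + Tc6 = 0 := by
      rw [hTc3, hTc6]
      have key : (∑ a, ∑ b, ∑ c, ∑ l, ∑ m,
            X a f * X b g * X c h * (r l c * (C l m a • r b m)))
          = ∑ a, ∑ b, ∑ c, ∑ l, ∑ m,
            -(X a f * X b g * X c h * (r l b * (C l m a • r c m))) := by
        calc (∑ a, ∑ b, ∑ c, ∑ l, ∑ m, X a f * X b g * X c h * (r l c * (C l m a • r b m)))
            = ∑ p : ι × ι × ι × ι × ι, X p.1 f * X p.2.1 g * X p.2.2.1 h *
                (r p.2.2.2.1 p.2.2.1 * (C p.2.2.2.1 p.2.2.2.2 p.1 • r p.2.1 p.2.2.2.2)) :=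
              (flat5 (fun a b c l m => X a f * X b g * X c h * (r l c * (C l m a • r b m)))).symm
          _ = ∑ p : ι × ι × ι × ι × ι, -(X p.1 f * X p.2.1 g * X p.2.2.1 h *
                (r p.2.2.2.1 p.2.1 * (C p.2.2.2.1 p.2.2.2.2 p.1 • r p.2.2.1 p.2.2.2.2))) := by
              refine Fintype.sum_equiv
                ⟨fun p => (p.1, p.2.1, p.2.2.1, p.2.2.2.2, p.2.2.2.1),
                 fun p => (p.1, p.2.1, p.2.2.1, p.2.2.2.2, p.2.2.2.1),
                 fun p => rfl, fun p => rfl⟩ _ _ ?_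
              rintro ⟨a, b, c, l, m⟩
              dsimp only [Equiv.coe_fn_mk]
              rw [hC_anti m l, hr_skew m b, hr_skew c l]
              simp only [Algebra.smul_def, map_neg]
              ring
          _ = ∑ a, ∑ b, ∑ c, ∑ l, ∑ m,
                -(X a f * X b g * X c h * (r l b * (C l m a • r c m))) :=
              flat5 (fun a b c l m => -(X a f * X b g * X c h * (r l b * (C l m a • r c m))))
      rw [key]
      simp only [← Finset.sum_add_distrib, add_neg_cancel, Finset.sum_const_zero]
    have p52 : Tc5 + Tc2 = 0 := by
      rw [hTc5, hTc2]
      have key : (∑ a, ∑ b, ∑ c, ∑ l, ∑ m,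
            X a f * X b g * X c h * (r l a * (C l m b • r c m)))
          = ∑ a, ∑ b, ∑ c, ∑ l, ∑ m,
            -(X a f * X b g * X c h * (r l c * (C l m b • r a m))) := by
        calc (∑ a, ∑ b, ∑ c, ∑ l, ∑ m, X a f * X b g * X c h * (r l a * (C l m b • r c m)))
            = ∑ p : ι × ι × ι × ι × ι, X p.1 f * X p.2.1 g * X p.2.2.1 h *
                (r p.2.2.2.1 p.1 * (C p.2.2.2.1 p.2.2.2.2 p.2.1 • r p.2.2.1 p.2.2.2.2)) :=
              (flat5 (fun a b c l m => X a f * X b g * X c h * (r l a * (C l m b • r c m)))).symm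
          _ = ∑ p : ι × ι × ι × ι × ι, -(X p.1 f * X p.2.1 g * X p.2.2.1 h *
                (r p.2.2.2.1 p.2.2.1 * (C p.2.2.2.1 p.2.2.2.2 p.2.1 • r p.1 p.2.2.2.2))) := by
              refine Fintype.sum_equiv
                ⟨fun p => (p.1, p.2.1, p.2.2.1, p.2.2.2.2, p.2.2.2.1),
                 fun p => (p.1, p.2.1, p.2.2.1, p.2.2.2.2, p.2.2.2.1),
                 fun p => rfl, fun p => rfl⟩ _ _ ?_
              rintro ⟨a, b, c, l, m⟩
              dsimp only [Equiv.coe_fn_mk]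
              rw [hC_anti m l, hr_skew m c, hr_skew a l]
              simp only [Algebra.smul_def, map_neg]
              ring
          _ = ∑ a, ∑ b, ∑ c, ∑ l, ∑ m,
                -(X a f * X b g * X c h * (r l c * (C l m b • r a m))) :=
              flat5 (fun a b c l m => -(X a f * X b g * X c h * (r l c * (C l m b • r a m))))
      rw [key]
      simp only [← Finset.sum_add_distrib, add_neg_cancel, Finset.sum_const_zero]
    -- pairings among YB derivative terms
    have d1 : Td1 + Td2 = 0 := by
      rw [hTd1, hTd2]
      simp only [← Finset.sum_add_distrib]
      refine Finset.sum_eq_zero fun a _ => Finset.sum_eq_zero fun b _ =>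
        Finset.sum_eq_zero fun c _ => Finset.sum_eq_zero fun l _ => ?_
      rw [hr_skew c b, map_neg]
      ring
    have d2 : Td3 + Td4 = 0 := by
      rw [hTd3, hTd4]
      simp only [← Finset.sum_add_distrib]
      refine Finset.sum_eq_zero fun a _ => Finset.sum_eq_zero fun b _ =>
        Finset.sum_eq_zero fun c _ => Finset.sum_eq_zero fun l _ => ?_
      rw [hr_skew a c, map_neg]
      ring
    have d3 : Td5 + Td6 = 0 := by
      rw [hTd5, hTd6]
      simp only [← Finset.sum_add_distrib]
      refine Finset.sum_eq_zero fun a _ => Finset.sum_eq_zero fun b _ =>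
        Finset.sum_eq_zero fun c _ => Finset.sum_eq_zero fun l _ => ?_
      rw [hr_skew b a, map_neg]
      ring
    -- identify J derivative terms with YB derivative terms
    have dA : A2 + Td1 = 0 := by
      rw [hA2, hTd1]
      have key : (∑ i, ∑ j, ∑ k, ∑ l, X i f * r i j * (X k g * X j (r k l) * X l h))
          = ∑ a, ∑ b, ∑ c, ∑ l, -(X a f * X b g * X c h * (r l a * X l (r b c))) := by
        calc (∑ i, ∑ j, ∑ k, ∑ l, X i f * r i j * (X k g * X j (r k l) * X l h))
            = ∑ p : ι × ι × ι × ι,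
                X p.1 f * r p.1 p.2.1 * (X p.2.2.1 g * X p.2.1 (r p.2.2.1 p.2.2.2) * X p.2.2.2 h) :=
              (flat4 (fun i j k l => X i f * r i j * (X k g * X j (r k l) * X l h))).symm
          _ = ∑ p : ι × ι × ι × ι, -(X p.1 f * X p.2.1 g * X p.2.2.1 h *
                (r p.2.2.2 p.1 * X p.2.2.2 (r p.2.1 p.2.2.1))) := by
              refine Fintype.sum_equiv
                ⟨fun p => (p.1, p.2.2.1, p.2.2.2, p.2.1),
                 fun p => (p.1, p.2.2.2, p.2.1, p.2.2.1),
                 fun p => rfl, fun p => rfl⟩ _ _ ?_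
              rintro ⟨i, j, k, l⟩
              dsimp only [Equiv.coe_fn_mk]
              rw [hr_skew j i]
              ring
          _ = ∑ a, ∑ b, ∑ c, ∑ l, -(X a f * X b g * X c h * (r l a * X l (r b c))) :=
              flat4 (fun a b c l => -(X a f * X b g * X c h * (r l a * X l (r b c))))
      rw [key]
      simp only [← Finset.sum_add_distrib, neg_add_cancel, Finset.sum_const_zero]
    have dB : B2 + Td3 = 0 := by
      rw [hB2, hTd3]
      have key : (∑ i, ∑ j, ∑ k, ∑ l, X i g * r i j * (X k h * X j (r k l) * X l f))
          = ∑ a, ∑ b, ∑ c, ∑ l, -(X a f * X b g * X c h * (r l b * X l (r c a))) := by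
        calc (∑ i, ∑ j, ∑ k, ∑ l, X i g * r i j * (X k h * X j (r k l) * X l f))
            = ∑ p : ι × ι × ι × ι,
                X p.1 g * r p.1 p.2.1 * (X p.2.2.1 h * X p.2.1 (r p.2.2.1 p.2.2.2) * X p.2.2.2 f) :=
              (flat4 (fun i j k l => X i g * r i j * (X k h * X j (r k l) * X l f))).symm
          _ = ∑ p : ι × ι × ι × ι, -(X p.1 f * X p.2.1 g * X p.2.2.1 h *
                (r p.2.2.2 p.2.1 * X p.2.2.2 (r p.2.2.1 p.1))) := by
              refine Fintype.sum_equiv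
                ⟨fun p => (p.2.2.2, p.1, p.2.2.1, p.2.1),
                 fun p => (p.2.1, p.2.2.2, p.2.2.1, p.1),
                 fun p => rfl, fun p => rfl⟩ _ _ ?_
              rintro ⟨i, j, k, l⟩
              dsimp only [Equiv.coe_fn_mk]
              rw [hr_skew j i]
              ring
          _ = ∑ a, ∑ b, ∑ c, ∑ l, -(X a f * X b g * X c h * (r l b * X l (r c a))) :=
              flat4 (fun a b c l => -(X a f * X b g * X c h * (r l b * X l (r c a))))
      rw [key]
      simp only [← Finset.sum_add_distrib, neg_add_cancel, Finset.sum_const_zero]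
    have dC : C2 + Td5 = 0 := by
      rw [hC2, hTd5]
      have key : (∑ i, ∑ j, ∑ k, ∑ l, X i h * r i j * (X k f * X j (r k l) * X l g))
          = ∑ a, ∑ b, ∑ c, ∑ l, -(X a f * X b g * X c h * (r l c * X l (r a b))) := by
        calc (∑ i, ∑ j, ∑ k, ∑ l, X i h * r i j * (X k f * X j (r k l) * X l g))
            = ∑ p : ι × ι × ι × ι,
                X p.1 h * r p.1 p.2.1 * (X p.2.2.1 f * X p.2.1 (r p.2.2.1 p.2.2.2) * X p.2.2.2 g) :=
              (flat4 (fun i j k l => X i h * r i j * (X k f * X j (r k l) * X l g))).symm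
          _ = ∑ p : ι × ι × ι × ι, -(X p.1 f * X p.2.1 g * X p.2.2.1 h *
                (r p.2.2.2 p.2.2.1 * X p.2.2.2 (r p.1 p.2.1))) := by
              refine Fintype.sum_equiv
                ⟨fun p => (p.2.2.1, p.2.2.2, p.1, p.2.1),
                 fun p => (p.2.2.1, p.2.2.2, p.1, p.2.1),
                 fun p => rfl, fun p => rfl⟩ _ _ ?_
              rintro ⟨i, j, k, l⟩
              dsimp only [Equiv.coe_fn_mk]
              rw [hr_skew j i]
              ring
          _ = ∑ a, ∑ b, ∑ c, ∑ l, -(X a f * X b g * X c h * (r l c * X l (r a b))) :=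
              flat4 (fun a b c l => -(X a f * X b g * X c h * (r l c * X l (r a b))))
      rw [key]
      simp only [← Finset.sum_add_distrib, neg_add_cancel, Finset.sum_const_zero]
    -- the Yang-Baxter hypothesis, expanded
    have hTexp : (Tc1 + Td1) - (Tc2 + Td2) + (Tc3 + Td3) - (Tc4 + Td4)
        + (Tc5 + Td5) - (Tc6 + Td6) = 0 := by
      rw [hTc1, hTc2, hTc3, hTc4, hTc5, hTc6, hTd1, hTd2, hTd3, hTd4, hTd5, hTd6]
      have h0 : (∑ a, ∑ b, ∑ c, X a f * X b g * X c h *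
          (E a b c - E a c b + E b c a - E b a c + E c a b - E c b a)) = 0 := by
        refine Finset.sum_eq_zero fun a _ => Finset.sum_eq_zero fun b _ =>
          Finset.sum_eq_zero fun c _ => ?_
        rw [hYB a b c, mul_zero]
      rw [← h0]
      simp only [hE, mul_sub, mul_add, Finset.mul_sum, Finset.sum_add_distrib,
        Finset.sum_sub_distrib]
    have h2 : (B f (B g h) + B g (B h f) + B h (B f g))
        + (B f (B g h) + B g (B h f) + B h (B f g)) = 0 := by
      linear_combination 2*e1 + 2*e2 + 2*e3 + 2*pg + 2*ph + 2*pf + 2*cg + 2*ch + 2*cf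
        + 2*dA + 2*dB + 2*dC - hTexp + p14 + p36 + p52 - d1 - d2 - d3
    have h3 : (2:ℝ) • (B f (B g h) + B g (B h f) + B h (B f g)) = 0 := by
      rw [two_smul]; exact h2
    calc B f (B g h) + B g (B h f) + B h (B f g)
        = ((2:ℝ)⁻¹ * 2) • (B f (B g h) + B g (B h f) + B h (B f g)) := by
          rw [show ((2:ℝ)⁻¹ * 2) = 1 by norm_num, one_smul]
      _ = (2:ℝ)⁻¹ • ((2:ℝ) • (B f (B g h) + B g (B h f) + B h (B f g))) := mul_smul _ _ _
      _ = 0 := by rw [h3, smul_zero]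
end

section
/- Let L and R be two actions of the Lie algebra with structure constants C on A by derivations that commute with each other: L i ∘ R j = R j ∘ L i for all i, j. Let r : ι → ι → ℝ be skew and satisfy the CYBE for C. Define B_L f g = Σ_{i,j} (r i j) • ((L i f) * (L j g)) and B_R f g = Σ_{i,j} (r i j) • ((R i f) * (R j g)). Then for all s, t ∈ ℝ the bracket (f, g) ↦ s • (B_L f g) + t • (B_R f g) is antisymmetric and satisfies the Jacobi identity; in particular the two Poisson brackets B_L and B_R are compatible, and the Sklyanin bracket (f, g) ↦ B_R f g − B_L f g is a Poisson bracket on A. -/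
open Finset

private lemma sum3_rot'' {κ : Type*} [Fintype κ] {M : Type*} [AddCommMonoid M]
    (S : κ → κ → κ → M) :
    ∑ i, ∑ j, ∑ k, S i j k = ∑ i, ∑ j, ∑ k, S j k i := by
  have h1 : ∑ x : κ × κ × κ, S x.1 x.2.1 x.2.2 = ∑ x : κ × κ × κ, S x.2.1 x.2.2 x.1 :=
    Fintype.sum_equiv ⟨fun x => (x.2.2, x.1, x.2.1), fun x => (x.2.1, x.2.2, x.1),
      fun x => rfl, fun x => rfl⟩ _ _ (fun x => rfl)
  simpa [Fintype.sum_prod_type] using h1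

private lemma sum4_perm'' {κ : Type*} [Fintype κ] {M : Type*} [AddCommMonoid M]
    (T : κ → κ → κ → κ → M) :
    ∑ i, ∑ j, ∑ k, ∑ l, T i j k l = ∑ i, ∑ j, ∑ k, ∑ l, T l k i j := by
  have h1 : ∑ x : κ × κ × κ × κ, T x.1 x.2.1 x.2.2.1 x.2.2.2
      = ∑ x : κ × κ × κ × κ, T x.2.2.2 x.2.2.1 x.1 x.2.1 :=
    Fintype.sum_equiv ⟨fun x => (x.2.2.1, x.2.2.2, x.2.1, x.1),
      fun x => (x.2.2.2, x.2.2.1, x.1, x.2.1),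
      fun x => rfl, fun x => rfl⟩ _ _ (fun x => rfl)
  simpa [Fintype.sum_prod_type] using h1

private lemma sum5_perm'' {κ : Type*} [Fintype κ] {M : Type*} [AddCommMonoid M]
    (T : κ → κ → κ → κ → κ → M) :
    ∑ i, ∑ j, ∑ k, ∑ l, ∑ m, T i j k l m = ∑ i, ∑ j, ∑ k, ∑ l, ∑ m, T k l m j i := by
  have h1 : ∑ x : κ × κ × κ × κ × κ, T x.1 x.2.1 x.2.2.1 x.2.2.2.1 x.2.2.2.2
      = ∑ x : κ × κ × κ × κ × κ, T x.2.2.1 x.2.2.2.1 x.2.2.2.2 x.2.1 x.1 :=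
    Fintype.sum_equiv ⟨fun x => (x.2.2.2.2, x.2.2.2.1, x.1, x.2.1, x.2.2.1),
      fun x => (x.2.2.1, x.2.2.2.1, x.2.2.2.2, x.2.1, x.1),
      fun x => rfl, fun x => rfl⟩ _ _ (fun x => rfl)
  simpa [Fintype.sum_prod_type] using h1

private lemma expand_lemma'' {κ : Type*} [Fintype κ] {A : Type*} [CommRing A] [Algebra ℝ A]
    (X : κ → Derivation ℝ A A) (r : κ → κ → ℝ) (u v w : A) :
    ∑ i, ∑ j, r i j • (X i u * X j (∑ k, ∑ l, r k l • (X k v * X l w)))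
    = (∑ i, ∑ j, ∑ k, ∑ l, (r i j * r k l) • (X i u * X j (X k v) * X l w))
    + (∑ i, ∑ j, ∑ k, ∑ l, (r i j * r k l) • (X i u * X k v * X j (X l w))) := by
  simp only [map_sum, Finset.mul_sum, Finset.smul_sum, ← Finset.sum_add_distrib]
  refine Finset.sum_congr rfl fun i _ => Finset.sum_congr rfl fun j _ =>
    Finset.sum_congr rfl fun k _ => Finset.sum_congr rfl fun l _ => ?_
  rw [Derivation.map_smul, Derivation.leibniz]
  simp only [smul_eq_mul, Algebra.smul_def, map_mul]
  ring

private lemma group_lemma'' {κ : Type*} [Fintype κ] {A : Type*} [CommRing A] [Algebra ℝ A]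
    (C : κ → κ → κ → ℝ) (X : κ → Derivation ℝ A A)
    (hX : ∀ i j f, X i (X j f) - X j (X i f) = ∑ k, C i j k • X k f)
    (r : κ → κ → ℝ) (hr : ∀ i j, r i j = -(r j i)) (f g h : A) :
    (∑ i, ∑ j, ∑ k, ∑ l, (r i j * r k l) • (X i h * X j (X k f) * X l g))
    + (∑ i, ∑ j, ∑ k, ∑ l, (r i j * r k l) • (X i g * X k h * X j (X l f)))
    = ∑ a, ∑ b, ∑ e, (∑ j, ∑ k, r e j * r k b * C j k a) • (X a f * X b g * X e h) := by
  rw [sum4_perm'' (fun i j k l => (r i j * r k l) • (X i g * X k h * X j (X l f)))]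
  simp only [← Finset.sum_add_distrib]
  have key : ∀ i j k l, (r i j * r k l) • (X i h * X j (X k f) * X l g)
      + (r l k * r i j) • (X l g * X i h * X k (X j f))
      = ∑ m, (r i j * r k l * C j k m) • (X m f * X l g * X i h) := by
    intro i j k l
    have step1 : (r i j * r k l) • (X i h * X j (X k f) * X l g)
        + (r l k * r i j) • (X l g * X i h * X k (X j f))
        = (r i j * r k l) • ((X j (X k f) - X k (X j f)) * (X l g * X i h)) := by
      rw [hr l k]
      simp only [Algebra.smul_def, map_mul, map_neg]
      ring
    rw [step1, hX j k f, Finset.sum_mul, Finset.smul_sum]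
    refine Finset.sum_congr rfl fun m _ => ?_
    simp only [Algebra.smul_def, map_mul]
    ring
  calc (∑ i, ∑ j, ∑ k, ∑ l, ((r i j * r k l) • (X i h * X j (X k f) * X l g)
          + (r l k * r i j) • (X l g * X i h * X k (X j f))))
      = ∑ i, ∑ j, ∑ k, ∑ l, ∑ m, (r i j * r k l * C j k m) • (X m f * X l g * X i h) := by
        exact Finset.sum_congr rfl fun i _ => Finset.sum_congr rfl fun j _ =>
          Finset.sum_congr rfl fun k _ => Finset.sum_congr rfl fun l _ => key i j k l
    _ = ∑ i, ∑ j, ∑ k, ∑ l, ∑ m, (r k l * r m j * C l m i) • (X i f * X j g * X k h) :=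
        sum5_perm'' (fun i j k l m => (r i j * r k l * C j k m) • (X m f * X l g * X i h))
    _ = ∑ a, ∑ b, ∑ e, (∑ j, ∑ k, r e j * r k b * C j k a) • (X a f * X b g * X e h) := by
        simp only [← Finset.sum_smul]

private lemma final_step'' {κ : Type*} [Fintype κ] {A : Type*} [CommRing A] [Algebra ℝ A]
    (C : κ → κ → κ → ℝ) (X : κ → Derivation ℝ A A)
    (r : κ → κ → ℝ) (hr : ∀ i j, r i j = -(r j i))
    (hY : ∀ a b c, ∑ j, ∑ l, (r a j * r b l * C j l c + r b j * r c l * C j l a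
        + r c j * r a l * C j l b) = 0)
    (f g h : A) :
    (∑ a, ∑ b, ∑ e, (∑ j, ∑ k, r e j * r k b * C j k a) • (X a f * X b g * X e h))
    + (∑ a, ∑ b, ∑ e, (∑ j, ∑ k, r e j * r k b * C j k a) • (X a g * X b h * X e f))
    + (∑ a, ∑ b, ∑ e, (∑ j, ∑ k, r e j * r k b * C j k a) • (X a h * X b f * X e g)) = 0 := by
  rw [sum3_rot'' (fun a b e => (∑ j, ∑ k, r e j * r k b * C j k a) • (X a g * X b h * X e f)),
    sum3_rot'' (fun a b e => (∑ j, ∑ k, r e j * r k b * C j k a) • (X a h * X b f * X e g)),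
    sum3_rot'' (fun a b e => (∑ j, ∑ k, r a j * r k e * C j k b) • (X b h * X e f * X a g))]
  simp only [← Finset.sum_add_distrib]
  refine Finset.sum_eq_zero fun a _ => Finset.sum_eq_zero fun b _ =>
    Finset.sum_eq_zero fun e _ => ?_
  have hc : (∑ j, ∑ k, r e j * r k b * C j k a) + (∑ j, ∑ k, r a j * r k e * C j k b)
      + (∑ j, ∑ k, r b j * r k a * C j k e) = 0 := by
    have hY1 := hY a e b
    calc (∑ j, ∑ k, r e j * r k b * C j k a) + (∑ j, ∑ k, r a j * r k e * C j k b)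
          + (∑ j, ∑ k, r b j * r k a * C j k e)
        = ∑ j, ∑ k, -(r a j * r e k * C j k b + r e j * r b k * C j k a
            + r b j * r a k * C j k e) := by
          simp only [← Finset.sum_add_distrib]
          refine Finset.sum_congr rfl fun j _ => Finset.sum_congr rfl fun k _ => ?_
          rw [hr k b, hr k e, hr k a]; ring
      _ = -(∑ j, ∑ l, (r a j * r e l * C j l b + r e j * r b l * C j l a
            + r b j * r a l * C j l e)) := by
          simp only [← Finset.sum_neg_distrib]
      _ = 0 := by rw [hY1, neg_zero]
  have hm : (∑ j, ∑ k, r e j * r k b * C j k a) • (X a f * X b g * X e h)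
      + (∑ j, ∑ k, r a j * r k e * C j k b) • (X b g * X e h * X a f)
      + (∑ j, ∑ k, r b j * r k a * C j k e) • (X e h * X a f * X b g)
      = ((∑ j, ∑ k, r e j * r k b * C j k a) + (∑ j, ∑ k, r a j * r k e * C j k b)
        + (∑ j, ∑ k, r b j * r k a * C j k e)) • (X a f * X b g * X e h) := by
    simp only [Algebra.smul_def, map_add]
    ring
  rw [hm, hc, zero_smul]

private lemma skew_jacobi'' {κ : Type*} [Fintype κ] {A : Type*} [CommRing A] [Algebra ℝ A]
    (C : κ → κ → κ → ℝ) (X : κ → Derivation ℝ A A)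
    (hX : ∀ i j f, X i (X j f) - X j (X i f) = ∑ k, C i j k • X k f)
    (r : κ → κ → ℝ) (hr : ∀ i j, r i j = -(r j i))
    (hY : ∀ a b c, ∑ j, ∑ l, (r a j * r b l * C j l c + r b j * r c l * C j l a
        + r c j * r a l * C j l b) = 0)
    (f g h : A) :
    (∑ i, ∑ j, r i j • (X i f * X j (∑ k, ∑ l, r k l • (X k g * X l h)))) +
    (∑ i, ∑ j, r i j • (X i g * X j (∑ k, ∑ l, r k l • (X k h * X l f)))) +
    (∑ i, ∑ j, r i j • (X i h * X j (∑ k, ∑ l, r k l • (X k f * X l g)))) = 0 := by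
  rw [expand_lemma'' X r f g h, expand_lemma'' X r g h f, expand_lemma'' X r h f g]
  have e1 := group_lemma'' C X hX r hr f g h
  have e2 := group_lemma'' C X hX r hr g h f
  have e3 := group_lemma'' C X hX r hr h f g
  have hfin := final_step'' C X r hr hY f g h
  linear_combination e1 + e2 + e3 + hfin

private lemma skew_anti'' {κ : Type*} [Fintype κ] {A : Type*} [CommRing A] [Algebra ℝ A]
    (X : κ → Derivation ℝ A A) (r : κ → κ → ℝ)
    (hr : ∀ i j, r i j = -(r j i)) (f g : A) :
    ∑ i, ∑ j, r i j • (X i f * X j g) = -(∑ i, ∑ j, r i j • (X i g * X j f)) := by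
  rw [Finset.sum_comm (s := Finset.univ) (t := Finset.univ)
    (f := fun i j => r i j • (X i g * X j f))]
  rw [← Finset.sum_neg_distrib]
  refine Finset.sum_congr rfl fun i _ => ?_
  rw [← Finset.sum_neg_distrib]
  refine Finset.sum_congr rfl fun j _ => ?_
  rw [hr i j]
  simp only [Algebra.smul_def, map_neg]
  ring

private def sumC'' {ι : Type*} (C : ι → ι → ι → ℝ) : ι ⊕ ι → ι ⊕ ι → ι ⊕ ι → ℝ
  | .inl i, .inl j, .inl k => C i j k
  | .inr i, .inr j, .inr k => C i j k
  | _, _, _ => 0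

private def sumR'' {ι : Type*} (s t : ℝ) (r : ι → ι → ℝ) : ι ⊕ ι → ι ⊕ ι → ℝ
  | .inl i, .inl j => s * r i j
  | .inr i, .inr j => t * r i j
  | _, _ => 0

/-- Given two commuting actions `L`, `R` of the Lie algebra with structure
constants `C` on `A` by derivations and a skew solution `r` of the CYBE for `C`, every
linear combination `s • B_L + t • B_R` of the induced brackets is a Poisson bracket
(so `B_L` and `B_R` are compatible), and in particular the Sklyanin bracket
`B_R - B_L` is a Poisson bracket on `A`. -/
theorem stmt_3 {ι : Type*} [Fintype ι] {A : Type*} [CommRing A] [Algebra ℝ A]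
    (C : ι → ι → ι → ℝ)
    (hC_anti : ∀ i j k, C i j k = -(C j i k))
    (hC_jac : ∀ i j l m,
      ∑ k, (C i j k * C k l m + C j l k * C k i m + C l i k * C k j m) = 0)
    (L R : ι → Derivation ℝ A A)
    (hL : ∀ i j, ∀ f : A, L i (L j f) - L j (L i f) = ∑ k, C i j k • L k f)
    (hR : ∀ i j, ∀ f : A, R i (R j f) - R j (R i f) = ∑ k, C i j k • R k f)
    (hLR : ∀ i j, ∀ f : A, L i (R j f) = R j (L i f))
    (r : ι → ι → ℝ) (hr_skew : ∀ i j, r i j = -(r j i))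
    (hCYBE : ∀ a b c,
      ∑ j, ∑ l, (r a j * r b l * C j l c + r b j * r c l * C j l a
        + r c j * r a l * C j l b) = 0)
    (BL BR : A → A → A)
    (hBL : ∀ f g, BL f g = ∑ i, ∑ j, r i j • (L i f * L j g))
    (hBR : ∀ f g, BR f g = ∑ i, ∑ j, r i j • (R i f * R j g)) :
    (∀ s t : ℝ, ∀ B : A → A → A, (∀ f g, B f g = s • BL f g + t • BR f g) →
      (∀ f g, B f g = -(B g f)) ∧
      (∀ f g h, B f (B g h) + B g (B h f) + B h (B f g) = 0)) ∧
    (∀ Sk : A → A → A, (∀ f g, Sk f g = BR f g - BL f g) →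
      (∀ f g, Sk f g = -(Sk g f)) ∧
      (∀ f g h, Sk f (Sk g h) + Sk g (Sk h f) + Sk h (Sk f g) = 0)) := by
  have main : ∀ s t : ℝ, ∀ B : A → A → A, (∀ f g, B f g = s • BL f g + t • BR f g) →
      (∀ f g, B f g = -(B g f)) ∧
      (∀ f g h, B f (B g h) + B g (B h f) + B h (B f g) = 0) := by
    intro s t B hB
    set X : ι ⊕ ι → Derivation ℝ A A := Sum.elim L R with hXdef
    have hX : ∀ p q (f : A), X p (X q f) - X q (X p f) = ∑ k, sumC'' C p q k • X k f := by
      rintro (i | i) (j | j) f <;>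
        simp only [hXdef, Sum.elim_inl, Sum.elim_inr, Fintype.sum_sum_type, sumC'',
          zero_smul, Finset.sum_const_zero, add_zero, zero_add]
      · exact hL i j f
      · rw [hLR i j f, sub_self]
      · rw [hLR j i f, sub_self]
      · exact hR i j f
    have hr' : ∀ p q, sumR'' s t r p q = -(sumR'' s t r q p) := by
      rintro (i | i) (j | j) <;> simp only [sumR'', neg_zero] <;> rw [hr_skew i j] <;> ring
    have hY : ∀ a b c : ι ⊕ ι, ∑ j, ∑ l,
        (sumR'' s t r a j * sumR'' s t r b l * sumC'' C j l c
          + sumR'' s t r b j * sumR'' s t r c l * sumC'' C j l a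
          + sumR'' s t r c j * sumR'' s t r a l * sumC'' C j l b) = 0 := by
      have key : ∀ (u : ℝ) (a b c : ι),
          ∑ j, ∑ l, (u * r a j * (u * r b l) * C j l c + u * r b j * (u * r c l) * C j l a
            + u * r c j * (u * r a l) * C j l b) = 0 := by
        intro u a b c
        have h0 := hCYBE a b c
        calc ∑ j, ∑ l, (u * r a j * (u * r b l) * C j l c + u * r b j * (u * r c l) * C j l a
              + u * r c j * (u * r a l) * C j l b)
            = u ^ 2 * ∑ j, ∑ l, (r a j * r b l * C j l c + r b j * r c l * C j l a
              + r c j * r a l * C j l b) := by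
              rw [Finset.mul_sum]
              refine Finset.sum_congr rfl fun j _ => ?_
              rw [Finset.mul_sum]
              refine Finset.sum_congr rfl fun l _ => ?_
              ring
          _ = 0 := by rw [h0, mul_zero]
      rintro (a | a) (b | b) (c | c) <;>
        simp only [Fintype.sum_sum_type, sumR'', sumC'', mul_zero, zero_mul, add_zero,
          zero_add, Finset.sum_const_zero] <;>
        first
          | exact key s a b c
          | exact key t a b c
          | skip
    have hB2 : ∀ f g, B f g = ∑ p, ∑ q, sumR'' s t r p q • (X p f * X q g) := by
      intro f g
      rw [hB, hBL, hBR]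
      simp only [hXdef, Fintype.sum_sum_type, sumR'', Sum.elim_inl, Sum.elim_inr, zero_smul,
        Finset.sum_const_zero, add_zero, zero_add, Finset.smul_sum, smul_smul]
    constructor
    · intro f g
      rw [hB2 f g, hB2 g f]
      exact skew_anti'' X (sumR'' s t r) hr' f g
    · intro f g h
      rw [hB2 f (B g h), hB2 g (B h f), hB2 h (B f g), hB2 g h, hB2 h f, hB2 f g]
      exact skew_jacobi'' (sumC'' C) X hX (sumR'' s t r) hr' hY f g h
  refine ⟨main, fun Sk hSk => ?_⟩
  exact main (-1) 1 Sk (fun f g => by rw [hSk f g]; simp [sub_eq_neg_add])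
end

section
/- In the polynomial ring MvPolynomial ι ℝ, define the Berezin–Kirillov (Lie–Poisson) bracket by B P Q = Σ_{i,j,k} (C i j k) • ((X k) * (pderiv i P) * (pderiv j Q)), where X k denotes the k-th polynomial variable and pderiv i the partial derivative with respect to the i-th variable. Then B is antisymmetric, B P Q = −(B Q P), and satisfies the Jacobi identity B P (B Q S) + B Q (B S P) + B S (B P Q) = 0 for all polynomials P, Q, S. -/
/-!
Write `{P, Q}` for the bracket and `H_P = {P, ·}`, a derivation. Antisymmetry of `C` gives
antisymmetry of the bracket, and with it the Jacobiator `J(P, Q, S)` (the cyclic sum) becomes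
`(⁅H_P, H_Q⁆ - H_{P, Q}) S`. Since commutators of derivations are derivations, `J` is a derivation
in its last argument, hence, being cyclically symmetric, in each argument. A derivation of a
polynomial ring is determined by its values on the variables, so it suffices to check
`J(X l, X m, X n) = 0`, which is the Jacobi identity for `C`.
-/

namespace MvPolynomial

variable {R ι : Type*} [CommRing R] [Fintype ι] (C : ι → ι → ι → R)

noncomputable def hamiltonianDerivation (P : MvPolynomial ι R) :
    Derivation R (MvPolynomial ι R) (MvPolynomial ι R) :=
  ∑ i, ∑ j, ∑ k, (C i j k • (X k * pderiv i P)) • pderiv j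

noncomputable def liePoissonJacobiator (P Q S : MvPolynomial ι R) : MvPolynomial ι R :=
  hamiltonianDerivation C P (hamiltonianDerivation C Q S) +
    hamiltonianDerivation C Q (hamiltonianDerivation C S P) +
    hamiltonianDerivation C S (hamiltonianDerivation C P Q)

variable {C}

theorem hamiltonianDerivation_apply (P Q : MvPolynomial ι R) :
    hamiltonianDerivation C P Q = ∑ i, ∑ j, ∑ k, C i j k • (X k * pderiv i P * pderiv j Q) := by
  rw [hamiltonianDerivation, ← Derivation.coeFnAddMonoidHom_apply]
  simp

theorem hamiltonianDerivation_swap (hC : ∀ i j k, C i j k = -C j i k) (P Q : MvPolynomial ι R) :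
    hamiltonianDerivation C P Q = -hamiltonianDerivation C Q P := by
  simp only [hamiltonianDerivation_apply, ← Finset.sum_neg_distrib, ← neg_smul]
  rw [Finset.sum_comm]
  refine Fintype.sum_congr _ _ fun j => Fintype.sum_congr _ _ fun i =>
    Fintype.sum_congr _ _ fun k => ?_
  rw [hC, mul_right_comm]

theorem hamiltonianDerivation_X_X (i j : ι) :
    hamiltonianDerivation C (X i) (X j : MvPolynomial ι R) = ∑ k, C i j k • X k := by
  classical
  simp [hamiltonianDerivation_apply, pderiv_X, Pi.single_apply]

theorem liePoissonJacobiator_rotate (P Q S : MvPolynomial ι R) :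
    liePoissonJacobiator C P Q S = liePoissonJacobiator C Q S P := by
  simp only [liePoissonJacobiator]; abel

theorem liePoissonJacobiator_eq_apply (hC : ∀ i j k, C i j k = -C j i k)
    (P Q S : MvPolynomial ι R) :
    liePoissonJacobiator C P Q S =
      (⁅hamiltonianDerivation C P, hamiltonianDerivation C Q⁆ -
        hamiltonianDerivation C (hamiltonianDerivation C P Q)) S := by
  rw [liePoissonJacobiator, hamiltonianDerivation_swap hC S P, map_neg,
    hamiltonianDerivation_swap hC S, Derivation.sub_apply, Derivation.commutator_apply]
  ring

theorem liePoissonJacobiator_X_X_X (hC : ∀ i j k, C i j k = -C j i k)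
    (hjac : ∀ i j l m, ∑ k, (C i j k * C k l m + C j l k * C k i m + C l i k * C k j m) = 0)
    (l m n : ι) : liePoissonJacobiator C (X l) (X m) (X n : MvPolynomial ι R) = 0 := by
  simp only [liePoissonJacobiator, hamiltonianDerivation_X_X, map_sum, Derivation.map_smul,
    Finset.smul_sum, smul_smul, ← Finset.sum_add_distrib, ← add_smul]
  rw [Finset.sum_comm]
  refine Finset.sum_eq_zero fun p _ => ?_
  rw [← Finset.sum_smul]
  convert zero_smul R (X p : MvPolynomial ι R)
  rw [← neg_eq_zero, ← hjac m n l p, ← Finset.sum_neg_distrib]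
  refine Finset.sum_congr rfl fun k _ => ?_
  rw [hC l k p, hC m k p, hC n k p]
  ring

theorem liePoissonJacobiator_eq_zero (hC : ∀ i j k, C i j k = -C j i k)
    (hjac : ∀ i j l m, ∑ k, (C i j k * C k l m + C j l k * C k i m + C l i k * C k j m) = 0)
    (P Q S : MvPolynomial ι R) : liePoissonJacobiator C P Q S = 0 := by
  have of_X : ∀ P Q, (∀ n, liePoissonJacobiator C P Q (X n) = 0) →
      ∀ S, liePoissonJacobiator C P Q S = 0 := by
    intro P Q h S
    have hD : ⁅hamiltonianDerivation C P, hamiltonianDerivation C Q⁆ -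
        hamiltonianDerivation C (hamiltonianDerivation C P Q) = 0 :=
      derivation_ext fun n => by rw [← liePoissonJacobiator_eq_apply hC, h, Derivation.zero_apply]
    rw [liePoissonJacobiator_eq_apply hC, hD, Derivation.zero_apply]
  refine of_X P Q (fun n => ?_) S
  rw [← liePoissonJacobiator_rotate]
  refine of_X _ _ (fun m => ?_) Q
  rw [← liePoissonJacobiator_rotate]
  exact of_X _ _ (liePoissonJacobiator_X_X_X hC hjac m n) P

end MvPolynomial

open MvPolynomial

/-- The Berezin–Kirillov (Lie–Poisson) bracket
`B P Q = ∑ i j k, (C i j k) • (X k * pderiv i P * pderiv j Q)` on `MvPolynomial ι ℝ`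
is antisymmetric and satisfies the Jacobi identity. -/
theorem stmt_4 {ι : Type*} [Fintype ι] (C : ι → ι → ι → ℝ)
    (hC_anti : ∀ i j k, C i j k = -(C j i k))
    (hC_jac : ∀ i j l m,
      ∑ k, (C i j k * C k l m + C j l k * C k i m + C l i k * C k j m) = 0)
    (B : MvPolynomial ι ℝ → MvPolynomial ι ℝ → MvPolynomial ι ℝ)
    (hB : ∀ P Q, B P Q =
      ∑ i, ∑ j, ∑ k, C i j k • (MvPolynomial.X k * pderiv i P * pderiv j Q)) :
    (∀ P Q, B P Q = -(B Q P)) ∧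
    (∀ P Q S, B P (B Q S) + B Q (B S P) + B S (B P Q) = 0) := by
  obtain rfl : B = fun P Q => hamiltonianDerivation C P Q := by
    funext P Q
    rw [hB, hamiltonianDerivation_apply]
  exact ⟨hamiltonianDerivation_swap hC_anti, liePoissonJacobiator_eq_zero hC_anti hC_jac⟩
end
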